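/- Fix β₁, β₃ in the interior of U = {(x,y) ∈ [0,1]² : x+y ≤ 1} and ε₁, ε₃ > 0 small enough that the square region (β₁,β₃) + [-ε₁,ε₁] × [-ε₃,ε₃] lies inside the interior of U. Then the maximum of |ρ(β̃₁,β̃₃) - ρ(β₁,β₃)| over all (β̃₁,β̃₃) with |β̃₁-β₁| ≤ ε₁ and |β̃₃-β₃| ≤ ε₃ equals max( ρ(β₁+ε₁, β₃+ε₃) - ρ(β₁,β₃), ρ(β₁,β₃) - ρ(β₁-ε₁, β₃-ε₃) ), where ρ(β₁,β₃) = (2β₁β₃+2β₁+2β₃-β₁²-β₃²-1)/(1-(β₁-β₃)²). -/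

import Mathlib

/-!
ρ is increasing in each coordinate on the open triangle `0 < x, 0 < y, x + y < 1`, hence monotone
for the product order there. On a box inside the triangle, ρ therefore lies between its values at
the lower and the upper corner, and the largest deviation from the value at the centre is attained
at one of these two corners.
-/

noncomputable def rhoPhi (β₁ β₃ : ℝ) : ℝ :=
  (2 * β₁ * β₃ + 2 * β₁ + 2 * β₃ - β₁ ^ 2 - β₃ ^ 2 - 1) / (1 - (β₁ - β₃) ^ 2)

open Set

theorem MonotoneOn.isGreatest_image_abs_sub_Icc {α : Type*} [Preorder α] {f : α → ℝ}
    {a b c : α} (hf : MonotoneOn f (Icc a b)) (hc : c ∈ Icc a b) :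
    IsGreatest ((fun x => |f x - f c|) '' Icc a b) (max (f b - f c) (f c - f a)) := by
  have hab : a ≤ b := hc.1.trans hc.2
  have hbound : ∀ x ∈ Icc a b, f a ≤ f x ∧ f x ≤ f b := fun x hx =>
    ⟨hf (left_mem_Icc.2 hab) hx hx.1, hf hx (right_mem_Icc.2 hab) hx.2⟩
  obtain ⟨hac, hcb⟩ := hbound c hc
  constructor
  · rcases le_total (f c - f a) (f b - f c) with h | h
    · exact ⟨b, right_mem_Icc.2 hab, by
        simp only [max_eq_left h, abs_of_nonneg (sub_nonneg.2 hcb)]⟩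
    · exact ⟨a, left_mem_Icc.2 hab, by
        simp only [max_eq_right h, abs_of_nonpos (sub_nonpos.2 hac), neg_sub]⟩
  · rintro _ ⟨x, hx, rfl⟩
    obtain ⟨hax, hxb⟩ := hbound x hx
    exact abs_sub_le_iff.2 ⟨le_max_of_le_left (by linarith), le_max_of_le_right (by linarith)⟩

lemma rhoPhi_comm (x y : ℝ) : rhoPhi x y = rhoPhi y x := by
  unfold rhoPhi; ring_nf

lemma rhoPhi_le_rhoPhi_left {x₁ x₂ y : ℝ} (hx : 0 < x₁) (hy : 0 < y) (hs : x₂ + y < 1)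
    (h : x₁ ≤ x₂) : rhoPhi x₁ y ≤ rhoPhi x₂ y := by
  have hD₁ : 0 < 1 - (x₁ - y) ^ 2 := by nlinarith
  have hD₂ : 0 < 1 - (x₂ - y) ^ 2 := by nlinarith
  rw [rhoPhi, rhoPhi, div_le_div_iff₀ hD₁ hD₂]
  have ht : 0 ≤ x₂ - x₁ := sub_nonneg.2 h
  have hv : 0 < 1 - x₂ - y := by linarith
  have hw : 0 < 1 + x₂ - y := by linarith
  nlinarith [mul_nonneg ht (sq_nonneg (1 - x₂ - y)),
    mul_nonneg ht (mul_pos hy hv).le,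
    mul_nonneg ht (mul_pos hy hw).le,
    mul_nonneg (mul_nonneg ht ht) hv.le]

lemma rhoPhi_monotoneOn :
    MonotoneOn (fun p : ℝ × ℝ => rhoPhi p.1 p.2) {p | 0 < p.1 ∧ 0 < p.2 ∧ p.1 + p.2 < 1} := by
  rintro ⟨x₁, y₁⟩ ⟨hx₁, hy₁, -⟩ ⟨x₂, y₂⟩ ⟨hx₂, -, hs₂⟩ ⟨hx, hy⟩
  calc rhoPhi x₁ y₁ ≤ rhoPhi x₂ y₁ := rhoPhi_le_rhoPhi_left hx₁ hy₁ (by linarith) hx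
    _ = rhoPhi y₁ x₂ := rhoPhi_comm _ _
    _ ≤ rhoPhi y₂ x₂ := rhoPhi_le_rhoPhi_left hy₁ hx₂ (by linarith) hy
    _ = rhoPhi x₂ y₂ := rhoPhi_comm _ _

lemma Prod.mem_Icc_sub_add_iff {α β : Type*} [AddCommGroup α] [LinearOrder α]
    [IsOrderedAddMonoid α] [AddCommGroup β] [LinearOrder β] [IsOrderedAddMonoid β]
    {a r : α} {b s : β} {p : α × β} :
    p ∈ Icc (a - r, b - s) (a + r, b + s) ↔ |p.1 - a| ≤ r ∧ |p.2 - b| ≤ s := by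
  simp only [mem_Icc, Prod.le_def, abs_sub_le_iff, tsub_le_iff_right, sub_le_comm (a := a),
    sub_le_comm (a := b), add_comm r a, add_comm s b]
  tauto

theorem max_correlation_deviation_on_box
    (β₁ β₃ ε₁ ε₃ : ℝ) (hε₁ : 0 < ε₁) (hε₃ : 0 < ε₃)
    (hbox : ∀ x y : ℝ, |x - β₁| ≤ ε₁ → |y - β₃| ≤ ε₃ →
      0 < x ∧ 0 < y ∧ x + y < 1) :
    IsGreatest
      {d : ℝ | ∃ b₁ b₃ : ℝ, |b₁ - β₁| ≤ ε₁ ∧ |b₃ - β₃| ≤ ε₃ ∧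
        d = |rhoPhi b₁ b₃ - rhoPhi β₁ β₃|}
      (max (rhoPhi (β₁ + ε₁) (β₃ + ε₃) - rhoPhi β₁ β₃)
           (rhoPhi β₁ β₃ - rhoPhi (β₁ - ε₁) (β₃ - ε₃))) := by
  have hmono : MonotoneOn (fun p : ℝ × ℝ => rhoPhi p.1 p.2)
      (Icc (β₁ - ε₁, β₃ - ε₃) (β₁ + ε₁, β₃ + ε₃)) :=
    rhoPhi_monotoneOn.mono fun p hp => hbox p.1 p.2 (Prod.mem_Icc_sub_add_iff.1 hp).1
      (Prod.mem_Icc_sub_add_iff.1 hp).2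
  have hcentre : (β₁, β₃) ∈ Icc (β₁ - ε₁, β₃ - ε₃) (β₁ + ε₁, β₃ + ε₃) :=
    Prod.mem_Icc_sub_add_iff.2 (by simp [hε₁.le, hε₃.le])
  convert hmono.isGreatest_image_abs_sub_Icc hcentre using 1
  ext d
  simp only [mem_ofPred_eq, mem_image, Prod.exists, Prod.mem_Icc_sub_add_iff, and_assoc,
    eq_comm (a := d)]
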